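/- For any school choice problem and tier structure t, the outcome of the tiered deferred acceptance mechanism under truthful reporting is stable with respect to the tier structure t: it is individually rational, and every blocking pair (i, s) satisfies t_{μ(i)} < t_s (the student's assigned school lies in a strictly earlier tier than the blocking school). -/
import Mathlib


set_option linter.unusedSectionVars false

namespace SchoolChoice

/-- A strict preference over `S ∪ {self}`, encoded by an injective ranking function on
`Option S`; `none` denotes being unmatched (the student himself), and a smaller rank
means more preferred. Injective rankings on a finite set are exactly strict linear orders. -/
structure Pref (S : Type) where
  rank : Option S → ℕ
  inj : Function.Injective rank

/-- Quotas together with strict priorities of the schools: `prank s` ranks the students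
at school `s`, a smaller rank meaning higher priority. -/
structure Prio (I S : Type) where
  quota : S → ℕ
  prank : S → I → ℕ
  inj : ∀ s, Function.Injective (prank s)

variable {I S : Type} [Fintype I] [Fintype S] [DecidableEq I] [DecidableEq S]

/-- `i` has strictly higher priority than `j` at school `s`. -/
def Prio.higher (E : Prio I S) (s : S) (i j : I) : Prop :=
  E.prank s i < E.prank s j

/-- A matching assigns to each student a school or himself (`none`). -/
abbrev Matching (I S : Type) := I → Option S

/-- The set of students assigned to school `s`. -/
def assigned (μ : Matching I S) (s : S) : Finset I :=
  Finset.univ.filter (fun i => μ i = some s)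

/-- Quotas are respected. -/
def Feasible (E : Prio I S) (μ : Matching I S) : Prop :=
  ∀ s, (assigned μ s).card ≤ E.quota s

/-- `(i, s)` is a blocking pair of `μ` with respect to preferences `R`:
`i` strictly prefers `s` to his assignment, and either `s` has an empty seat
(wastefulness) or some student assigned to `s` has lower priority than `i`
(justified envy). -/
def Blocks (E : Prio I S) (R : I → Pref S) (μ : Matching I S) (i : I) (s : S) : Prop :=
  (R i).rank (some s) < (R i).rank (μ i) ∧
    ((assigned μ s).card < E.quota s ∨ ∃ j, μ j = some s ∧ E.higher s i j)

/-- Individual rationality: every student weakly prefers his assignment to being unmatched. -/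
def IndivRat (R : I → Pref S) (μ : Matching I S) : Prop :=
  ∀ i, (R i).rank (μ i) ≤ (R i).rank none

/-- Non-wastefulness: no student prefers a school with an empty seat to his assignment. -/
def NonWasteful (E : Prio I S) (R : I → Pref S) (μ : Matching I S) : Prop :=
  ∀ i s, (R i).rank (some s) < (R i).rank (μ i) → E.quota s ≤ (assigned μ s).card

/-- Stability: feasible, individually rational, and no blocking pair
(no justified envy and non-wasteful). -/
def Stable (E : Prio I S) (R : I → Pref S) (μ : Matching I S) : Prop :=
  Feasible E μ ∧ IndivRat R μ ∧ ∀ i s, ¬ Blocks E R μ i s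

/-- The student-optimal stable matching for the (reported) preferences. -/
def StudentOptimal (E : Prio I S) (R : I → Pref S) (μ : Matching I S) : Prop :=
  Stable E R μ ∧ ∀ ν, Stable E R ν → ∀ i, (R i).rank (μ i) ≤ (R i).rank (ν i)

open Classical in
/-- The student-proposing deferred acceptance mechanism: by the Gale–Shapley theorem its
outcome is the (unique) student-optimal stable matching of the reported preferences. -/
noncomputable def DA (E : Prio I S) (R : I → Pref S) : Matching I S :=
  if h : ∃ μ, StudentOptimal E R μ then h.choose else fun _ => none

/-- A strict upper bound for the values of a ranking. -/
noncomputable def bnd (p : Pref S) : ℕ := (Finset.univ.sup p.rank) + 1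

lemma rank_lt_bnd (p : Pref S) (x : Option S) : p.rank x < bnd p :=
  Nat.lt_succ_of_le (Finset.le_sup (Finset.mem_univ x))

private lemma mul_add_lt {a K B r : ℕ} (ha : a ≤ K) (hr : r < B) :
    a * B + r < (K + 1) * B := by
  calc a * B + r < a * B + B := by omega
    _ = (a + 1) * B := by ring
    _ ≤ (K + 1) * B := Nat.mul_le_mul (by omega) le_rfl

/-- Is an alternative "inside the market" `A`?  `none` always is. -/
def goodB (A : S → Prop) [DecidablePred A] : Option S → Bool
  | none => true
  | some s => decide (A s)

/-- The preference truncated to the set of schools `A`: schools in `A` (and the outside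
option `none`) keep their relative order, while all schools outside `A` are pushed below
`none` (become unacceptable), keeping their relative order among themselves. -/
noncomputable def trunc (A : S → Prop) [DecidablePred A] (p : Pref S) : Pref S where
  rank x := (if goodB A x then 0 else bnd p) + p.rank x
  inj := by
    intro x y h
    by_cases hx : goodB A x <;> by_cases hy : goodB A y <;>
      simp only [hx, hy, if_true, if_false, Bool.false_eq_true, zero_add] at h
    · exact p.inj h
    · have := rank_lt_bnd p x; omega
    · have := rank_lt_bnd p y; omega
    · exact p.inj (by omega)

/-- The reshuffled preference with respect to a tier structure `t`: acceptable schools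
are grouped by tier in increasing tier order (keeping the original relative order within
each tier) above `none`, and all unacceptable schools are placed below `none`. -/
noncomputable def reshuffle (t : S → ℕ) (p : Pref S) : Pref S where
  rank x :=
    Option.elim x ((Finset.univ.sup t + 1) * bnd p)
      (fun s =>
        if p.rank (some s) < p.rank none then t s * bnd p + p.rank (some s)
        else (Finset.univ.sup t + 1) * bnd p + 1 + p.rank (some s))
  inj := by
    have hB : ∀ x, p.rank x < bnd p := rank_lt_bnd p
    have hK : ∀ s : S, t s ≤ Finset.univ.sup t := fun s => Finset.le_sup (Finset.mem_univ s)
    intro x y h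
    rcases x with _ | s <;> rcases y with _ | s' <;>
      simp only [Option.elim_none, Option.elim_some] at h
    · rfl
    · by_cases hy : p.rank (some s') < p.rank none <;> simp only [hy, if_true, if_false] at h
      · have := mul_add_lt (hK s') (hB (some s')); omega
      · omega
    · by_cases hx : p.rank (some s) < p.rank none <;> simp only [hx, if_true, if_false] at h
      · have := mul_add_lt (hK s) (hB (some s)); omega
      · omega
    · by_cases hx : p.rank (some s) < p.rank none <;>
        by_cases hy : p.rank (some s') < p.rank none <;>
        simp only [hx, hy, if_true, if_false] at h
      · have hts : t s = t s' := by
          rcases Nat.lt_trichotomy (t s) (t s') with h1 | h1 | h1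
          · have h2 : t s * bnd p + p.rank (some s) < t s' * bnd p + p.rank (some s') := by
              have h3 := mul_add_lt (a := t s) (K := t s' - 1) (B := bnd p) (by omega) (hB (some s))
              have h4 : (t s' - 1 + 1) * bnd p = t s' * bnd p := by congr 1; omega
              omega
            omega
          · exact h1
          · have h2 : t s' * bnd p + p.rank (some s') < t s * bnd p + p.rank (some s) := by
              have h3 := mul_add_lt (a := t s') (K := t s - 1) (B := bnd p) (by omega) (hB (some s'))
              have h4 : (t s - 1 + 1) * bnd p = t s * bnd p := by congr 1; omega
              omega
            omega
        rw [hts] at h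
        exact p.inj (by omega)
      · have := mul_add_lt (hK s) (hB (some s)); omega
      · have := mul_add_lt (hK s') (hB (some s')); omega
      · exact p.inj (by omega)

/-- A tier structure assigning each school a tier in `{1, …, T}`, each tier nonempty. -/
def IsTierStructure (t : S → ℕ) (T : ℕ) : Prop :=
  (∀ s, 1 ≤ t s ∧ t s ≤ T) ∧ ∀ k, 1 ≤ k → k ≤ T → ∃ s, t s = k

/-- Rounds `1, …, k` of the tiered deferred acceptance mechanism: in round `k` the
students left unmatched so far participate in the DA mechanism with their preferences
truncated to the tier-`k` schools (already matched students participate with nothing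
acceptable); students matched in earlier rounds keep their assignments. -/
noncomputable def TDAaux (E : Prio I S) (t : S → ℕ) (Q : I → Pref S) : ℕ → Matching I S
  | 0 => fun _ => none
  | k + 1 => fun i =>
      match TDAaux E t Q k i with
      | some s => some s
      | none =>
          DA E (fun j =>
            if TDAaux E t Q k j = none then trunc (fun s => t s = k + 1) (Q j)
            else trunc (fun _ => False) (Q j)) i

/-- The tiered deferred acceptance mechanism under tier structure `t`. -/
noncomputable def TDA (E : Prio I S) (t : S → ℕ) (Q : I → Pref S) : Matching I S :=
  TDAaux E t Q (Finset.univ.sup t)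

/-- `Q` is a (pure) Nash equilibrium of the preference revelation game induced by the
mechanism `f` when the true preferences are `R`: no student can obtain a school he truly
strictly prefers by unilaterally changing his report. -/
def NashEq (R : I → Pref S) (f : (I → Pref S) → Matching I S) (Q : I → Pref S) : Prop :=
  ∀ (i : I) (Qi' : Pref S),
    (R i).rank (f Q i) ≤ (R i).rank (f (Function.update Q i Qi') i)

/-- `μ` is a Nash equilibrium outcome of the revelation game induced by `f` at true
preferences `R`. -/
def NashOutcome (R : I → Pref S) (f : (I → Pref S) → Matching I S) (μ : Matching I S) : Prop :=
  ∃ Q, NashEq R f Q ∧ f Q = μ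

/-- The preference `p` is aligned with the tier structure `t`: a (weakly) more preferred
school always lies in a weakly earlier tier. -/
def AlignedPref (t : S → ℕ) (p : Pref S) : Prop :=
  ∀ s s' : S, p.rank (some s) ≤ p.rank (some s') → t s ≤ t s'

/-- `p` lists exactly the school in `o` (if any) as acceptable. -/
def OnlyAcceptable (p : Pref S) (o : Option S) : Prop :=
  ∀ s : S, (p.rank (some s) < p.rank none ↔ o = some s)

/-- An Ergin cycle of the priority structure among the schools in `A`. -/
def Cycle (E : Prio I S) (A : S → Prop) : Prop :=
  ∃ a b : S, A a ∧ A b ∧ a ≠ b ∧ ∃ i j k : I,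
    E.higher a i j ∧ E.higher a j k ∧ E.higher b k i ∧
    ∃ Ia Ib : Finset I, Disjoint Ia Ib ∧
      (∀ l ∈ Ia, l ≠ i ∧ l ≠ j ∧ l ≠ k ∧ E.higher a l j) ∧
      (∀ l ∈ Ib, l ≠ i ∧ l ≠ j ∧ l ≠ k ∧ E.higher b l i) ∧
      Ia.card = E.quota a - 1 ∧ Ib.card = E.quota b - 1

/-- Within-tier acyclicity of a generalized priority structure: no Ergin cycle among the
schools of any single tier. -/
def WithinTierAcyclic (E : Prio I S) (t : S → ℕ) : Prop :=
  ∀ k : ℕ, ¬ Cycle E (fun s => t s = k)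

/-- The (strict) preference `pr` of school `s` over sets of students is a responsive
extension of its priorities. -/
def Responsive (E : Prio I S) (s : S) (pr : Finset I → Finset I → Prop) : Prop :=
  ∀ (J : Finset I) (i j : I), i ∉ J → j ∉ J → E.higher s i j →
    pr (insert i J) (insert j J)

/-- `t` is a refinement of `t'`: `t'` ranks `a` in a strictly later tier than `b` only
if `t` does. -/
def Refines (t t' : S → ℕ) : Prop :=
  ∀ a b : S, t' b < t' a → t b < t a


/-! ### Auxiliary development: existence of the student-optimal stable matching -/

section GaleShapley

open Classical in
/-- Candidate options of a student whose set of not-yet-rejecting schools is `X`. -/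
noncomputable def cand (X : Finset S) : Finset (Option S) := insert none (X.image some)

lemma none_mem_cand (X : Finset S) : (none : Option S) ∈ cand X :=
  Finset.mem_insert_self _ _

lemma some_mem_cand {X : Finset S} {s : S} : some s ∈ cand X ↔ s ∈ X := by
  simp [cand]

lemma cand_mono {X' X : Finset S} (h : X' ⊆ X) : cand X' ⊆ cand X := by
  intro x hx
  rcases Finset.mem_insert.1 hx with h1 | h1
  · exact h1 ▸ none_mem_cand X
  · rcases Finset.mem_image.1 h1 with ⟨s, hs, rfl⟩
    exact some_mem_cand.2 (h hs)

/-- The best option of a student among the schools in `X` and being unmatched. -/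
noncomputable def best (p : Pref S) (X : Finset S) : Option S :=
  (Finset.exists_min_image (s := cand X) p.rank ⟨none, none_mem_cand X⟩).choose

lemma best_spec (p : Pref S) (X : Finset S) :
    best p X ∈ cand X ∧ ∀ y ∈ cand X, p.rank (best p X) ≤ p.rank y :=
  (Finset.exists_min_image (s := cand X) p.rank ⟨none, none_mem_cand X⟩).choose_spec

lemma best_le_none (p : Pref S) (X : Finset S) :
    p.rank (best p X) ≤ p.rank none :=
  (best_spec p X).2 none (none_mem_cand X)

lemma best_le_some {p : Pref S} {X : Finset S} {s : S} (h : s ∈ X) :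
    p.rank (best p X) ≤ p.rank (some s) :=
  (best_spec p X).2 _ (some_mem_cand.2 h)

lemma mem_of_best_eq_some {p : Pref S} {X : Finset S} {s : S} (h : best p X = some s) :
    s ∈ X := by
  have h1 := (best_spec p X).1
  rw [h] at h1
  exact some_mem_cand.1 h1

lemma best_eq_of_subset {p : Pref S} {X' X : Finset S} {s : S} (hsub : X' ⊆ X)
    (hs : s ∈ X') (hb : best p X = some s) : best p X' = some s := by
  have h1 : p.rank (best p X') ≤ p.rank (some s) := best_le_some hs
  have h2 : p.rank (some s) ≤ p.rank (best p X') := by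
    rw [← hb]
    exact (best_spec p X).2 _ (cand_mono hsub (best_spec p X').1)
  exact p.inj (le_antisymm h1 h2)

open Classical in
/-- Students currently proposing to school `s`. -/
noncomputable def props (R : I → Pref S) (X : I → Finset S) (s : S) : Finset I :=
  Finset.univ.filter fun i => best (R i) (X i) = some s

open Classical in
/-- The number of proposers with strictly higher priority. -/
noncomputable def fcnt (E : Prio I S) (s : S) (P : Finset I) (i : I) : ℕ :=
  (P.filter fun j => E.prank s j < E.prank s i).card

open Classical in
/-- The proposers tentatively kept by the school: those with fewer than `quota`
higher-priority proposers. -/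
noncomputable def kept (E : Prio I S) (s : S) (P : Finset I) : Finset I :=
  P.filter fun i => fcnt E s P i < E.quota s

lemma kept_subset (E : Prio I S) (s : S) (P : Finset I) : kept E s P ⊆ P :=
  Finset.filter_subset _ _

lemma fcnt_lt_card {E : Prio I S} {s : S} {P : Finset I} {i : I} (h : i ∈ P) :
    fcnt E s P i < P.card := by
  classical
  have hsub : (P.filter fun j => E.prank s j < E.prank s i) ⊆ P.erase i := by
    intro j hj
    rcases Finset.mem_filter.1 hj with ⟨hjP, hlt⟩
    exact Finset.mem_erase.2 ⟨fun he => by simp [he] at hlt, hjP⟩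
  calc fcnt E s P i ≤ (P.erase i).card := Finset.card_le_card hsub
    _ < P.card := Finset.card_erase_lt_of_mem h

lemma fcnt_lt_fcnt {E : Prio I S} {s : S} {P : Finset I} {i j : I} (hi : i ∈ P)
    (hij : E.prank s i < E.prank s j) : fcnt E s P i < fcnt E s P j := by
  classical
  have hsub : insert i (P.filter fun l => E.prank s l < E.prank s i) ⊆
      P.filter fun l => E.prank s l < E.prank s j := by
    intro l hl
    rcases Finset.mem_insert.1 hl with rfl | hl
    · exact Finset.mem_filter.2 ⟨hi, hij⟩
    · rcases Finset.mem_filter.1 hl with ⟨hlP, hlt⟩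
      exact Finset.mem_filter.2 ⟨hlP, hlt.trans hij⟩
  have hni : i ∉ P.filter fun l => E.prank s l < E.prank s i := by
    simp
  calc fcnt E s P i + 1
      = (insert i (P.filter fun l => E.prank s l < E.prank s i)).card :=
        (Finset.card_insert_of_notMem hni).symm
    _ ≤ _ := Finset.card_le_card hsub

lemma kept_prank_lt {E : Prio I S} {s : S} {P : Finset I} {k j : I}
    (hk : k ∈ kept E s P) (hjP : j ∈ P) (hj : j ∉ kept E s P) :
    E.prank s k < E.prank s j := by
  classical
  rcases Finset.mem_filter.1 hk with ⟨hkP, hkc⟩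
  have hjc : ¬ fcnt E s P j < E.quota s := fun hc => hj (Finset.mem_filter.2 ⟨hjP, hc⟩)
  rcases lt_trichotomy (E.prank s k) (E.prank s j) with h | h | h
  · exact h
  · exact absurd (Finset.mem_filter.2 ⟨hjP, E.inj s h.symm ▸ hkc⟩) hj
  · exact absurd ((fcnt_lt_fcnt hjP h).trans hkc) hjc

lemma image_fcnt {E : Prio I S} {s : S} (P : Finset I) :
    P.image (fcnt E s P) = Finset.range P.card := by
  classical
  have hinj : Set.InjOn (fcnt E s P) P := by
    intro a ha b hb hab
    by_contra hne
    have hpr : E.prank s a ≠ E.prank s b := fun h => hne (E.inj s h)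
    rcases hpr.lt_or_gt with h | h
    · exact absurd hab (Nat.ne_of_lt (fcnt_lt_fcnt ha h))
    · exact absurd hab.symm (Nat.ne_of_lt (fcnt_lt_fcnt hb h))
  have hsub : P.image (fcnt E s P) ⊆ Finset.range P.card := by
    intro n hn
    rcases Finset.mem_image.1 hn with ⟨a, ha, rfl⟩
    exact Finset.mem_range.2 (fcnt_lt_card ha)
  have hcard : (P.image (fcnt E s P)).card = (Finset.range P.card).card := by
    rw [Finset.card_image_of_injOn hinj, Finset.card_range]
  exact Finset.eq_of_subset_of_card_le hsub (le_of_eq hcard.symm)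

lemma card_kept (E : Prio I S) (s : S) (P : Finset I) :
    (kept E s P).card = min (E.quota s) P.card := by
  classical
  have hinj : Set.InjOn (fcnt E s P) P := by
    intro a ha b hb hab
    by_contra hne
    have hpr : E.prank s a ≠ E.prank s b := fun h => hne (E.inj s h)
    rcases hpr.lt_or_gt with h | h
    · exact absurd hab (Nat.ne_of_lt (fcnt_lt_fcnt ha h))
    · exact absurd hab.symm (Nat.ne_of_lt (fcnt_lt_fcnt hb h))
  have h1 : (kept E s P).image (fcnt E s P) =
      (P.image (fcnt E s P)).filter (· < E.quota s) := by
    ext n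
    simp only [Finset.mem_image, Finset.mem_filter, kept]
    constructor
    · rintro ⟨a, ⟨haP, hac⟩, rfl⟩
      exact ⟨⟨a, haP, rfl⟩, hac⟩
    · rintro ⟨⟨a, haP, rfl⟩, hac⟩
      exact ⟨a, ⟨haP, hac⟩, rfl⟩
  have h2 : ((kept E s P).image (fcnt E s P)).card = (kept E s P).card :=
    Finset.card_image_of_injOn (hinj.mono (by exact_mod_cast kept_subset E s P))
  rw [← h2, h1, image_fcnt]
  have : (Finset.range P.card).filter (· < E.quota s) =
      Finset.range (min (E.quota s) P.card) := by
    ext n; simp only [Finset.mem_filter, Finset.mem_range, lt_min_iff]; omega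
  rw [this, Finset.card_range]

lemma card_kept_of_reject {E : Prio I S} {s : S} {P : Finset I} {j : I}
    (hjP : j ∈ P) (hj : j ∉ kept E s P) : (kept E s P).card = E.quota s := by
  classical
  have hjc : ¬ fcnt E s P j < E.quota s := fun hc => hj (Finset.mem_filter.2 ⟨hjP, hc⟩)
  have : E.quota s ≤ fcnt E s P j := not_lt.1 hjc
  have h2 : E.quota s < P.card := lt_of_le_of_lt this (fcnt_lt_card hjP)
  rw [card_kept]; omega

open Classical in
/-- One round of deferred acceptance: remove every school that rejects its proposer. -/
noncomputable def step (E : Prio I S) (R : I → Pref S) (X : I → Finset S) :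
    I → Finset S :=
  fun i => (X i).filter fun s => i ∈ kept E s (props R X s) ∨ i ∉ props R X s

lemma step_subset (E : Prio I S) (R : I → Pref S) (X : I → Finset S) (i : I) :
    step E R X i ⊆ X i :=
  Finset.filter_subset _ _

lemma mem_step {E : Prio I S} {R : I → Pref S} {X : I → Finset S} {i : I} {s : S} :
    s ∈ step E R X i ↔ s ∈ X i ∧ (i ∈ kept E s (props R X s) ∨ i ∉ props R X s) := by
  classical
  simp [step]

lemma mem_props {R : I → Pref S} {X : I → Finset S} {i : I} {s : S} :
    i ∈ props R X s ↔ best (R i) (X i) = some s := by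
  classical
  simp [props]

/-- Kept proposers keep proposing after the round. -/
lemma kept_mem_step {E : Prio I S} {R : I → Pref S} {X : I → Finset S} {s : S} {k : I}
    (hk : k ∈ kept E s (props R X s)) : best (R k) (step E R X k) = some s := by
  have hkP : k ∈ props R X s := kept_subset E s _ hk
  have hb : best (R k) (X k) = some s := mem_props.1 hkP
  have hs : s ∈ step E R X k := mem_step.2 ⟨mem_of_best_eq_some hb, Or.inl hk⟩
  exact best_eq_of_subset (step_subset E R X k) hs hb

/-- Invariant: no school assigned to someone by a stable matching ever rejects him. -/
def InvO (E : Prio I S) (R : I → Pref S) (X : I → Finset S) : Prop :=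
  ∀ ν, Stable E R ν → ∀ i s, ν i = some s → s ∈ X i

/-- Invariant: once a school rejected `i`, it always has a full set of higher-priority
proposers. -/
def InvR (E : Prio I S) (R : I → Pref S) (X : I → Finset S) : Prop :=
  ∀ i s, s ∉ X i → ∃ J : Finset I, J.card = E.quota s ∧
    ∀ j ∈ J, best (R j) (X j) = some s ∧ E.higher s j i

lemma invR_step {E : Prio I S} {R : I → Pref S} {X : I → Finset S}
    (h : InvR E R X) : InvR E R (step E R X) := by
  classical
  intro i s hs
  by_cases hXi : s ∈ X i
  · -- i was rejected by s this round
    have hmem : ¬ (i ∈ kept E s (props R X s) ∨ i ∉ props R X s) := by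
      intro hc
      exact hs (mem_step.2 ⟨hXi, hc⟩)
    push_neg at hmem
    obtain ⟨hik, hiP⟩ := hmem
    refine ⟨kept E s (props R X s), card_kept_of_reject hiP hik, fun k hk => ?_⟩
    exact ⟨kept_mem_step hk, kept_prank_lt hk hiP hik⟩
  · -- i was rejected earlier
    obtain ⟨J, hJcard, hJ⟩ := h i s hXi
    by_cases hrej : ∃ j0 ∈ props R X s, j0 ∉ kept E s (props R X s)
    · obtain ⟨j0, hj0P, hj0k⟩ := hrej
      refine ⟨kept E s (props R X s), card_kept_of_reject hj0P hj0k, fun k hk => ?_⟩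
      refine ⟨kept_mem_step hk, ?_⟩
      by_cases hkJ : k ∈ J
      · exact (hJ k hkJ).2
      · -- some j ∈ J is rejected; transitivity
        have hJP : J ⊆ props R X s := fun j hj => mem_props.2 (hJ j hj).1
        have hKcard : (kept E s (props R X s)).card = E.quota s :=
          card_kept_of_reject hj0P hj0k
        have : ∃ j ∈ J, j ∉ kept E s (props R X s) := by
          by_contra hc
          push_neg at hc
          have hJK : J = kept E s (props R X s) :=
            Finset.eq_of_subset_of_card_le hc (by omega)
          exact hkJ (hJK ▸ hk)
        obtain ⟨j, hjJ, hjK⟩ := this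
        exact (kept_prank_lt hk (hJP hjJ) hjK).trans (hJ j hjJ).2
    · push_neg at hrej
      refine ⟨J, hJcard, fun j hj => ?_⟩
      have hjP : j ∈ props R X s := mem_props.2 (hJ j hj).1
      exact ⟨kept_mem_step (hrej j hjP), (hJ j hj).2⟩

lemma invO_step {E : Prio I S} {R : I → Pref S} {X : I → Finset S}
    (h : InvO E R X) : InvO E R (step E R X) := by
  classical
  intro ν hν i s hi
  have hXi : s ∈ X i := h ν hν i s hi
  by_contra hs
  have hmem : ¬ (i ∈ kept E s (props R X s) ∨ i ∉ props R X s) := by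
    intro hc
    exact hs (mem_step.2 ⟨hXi, hc⟩)
  push_neg at hmem
  obtain ⟨hik, hiP⟩ := hmem
  set K := kept E s (props R X s) with hK
  have hKcard : K.card = E.quota s := card_kept_of_reject hiP hik
  -- some kept student is not assigned to s by ν
  have : ∃ k ∈ K, ν k ≠ some s := by
    by_contra hc
    push_neg at hc
    have hsub : insert i K ⊆ assigned ν s := by
      intro l hl
      rcases Finset.mem_insert.1 hl with rfl | hl
      · exact Finset.mem_filter.2 ⟨Finset.mem_univ _, hi⟩
      · exact Finset.mem_filter.2 ⟨Finset.mem_univ _, hc l hl⟩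
    have hiK : i ∉ K := hik
    have h1 : E.quota s + 1 ≤ (assigned ν s).card := by
      calc E.quota s + 1 = (insert i K).card := by
            rw [Finset.card_insert_of_notMem hiK, hKcard]
        _ ≤ _ := Finset.card_le_card hsub
    have h2 := hν.1 s
    omega
  obtain ⟨k, hkK, hkν⟩ := this
  have hkP : k ∈ props R X s := kept_subset E s _ hkK
  have hkb : best (R k) (X k) = some s := mem_props.1 hkP
  -- k strictly prefers s to ν k
  have hpref : (R k).rank (some s) < (R k).rank (ν k) := by
    have hle : (R k).rank (best (R k) (X k)) ≤ (R k).rank (ν k) := by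
      cases hνk : ν k with
      | none => exact best_le_none _ _
      | some s' => exact best_le_some (h ν hν k s' hνk)
    rw [hkb] at hle
    rcases lt_or_eq_of_le hle with h1 | h1
    · exact h1
    · exact absurd ((R k).inj h1).symm hkν
  exact hν.2.2 k s ⟨hpref, Or.inr ⟨i, hi, kept_prank_lt hkK hiP hik⟩⟩

lemma exists_fixed_iterate {α : Type} (f : α → α) (m : α → ℕ)
    (hf : ∀ x, f x ≠ x → m (f x) < m x) : ∀ x : α, ∃ n, f (f^[n] x) = f^[n] x := by
  intro x
  by_cases h : f x = x
  · exact ⟨0, h⟩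
  · obtain ⟨n, hn⟩ := exists_fixed_iterate f m hf (f x)
    exact ⟨n + 1, by rwa [Function.iterate_succ_apply]⟩
termination_by x => m x
decreasing_by exact hf x h

theorem exists_studentOptimal (E : Prio I S) (R : I → Pref S) :
    ∃ μ, StudentOptimal E R μ := by
  classical
  set f := step E R with hf
  -- measure decreases at non-fixed points
  have hmeas : ∀ X, f X ≠ X → (∑ i, (f X i).card) < ∑ i, (X i).card := by
    intro X hX
    have hne : ∃ i, f X i ≠ X i := by
      by_contra hc
      push_neg at hc
      exact hX (funext hc)
    obtain ⟨i, hi⟩ := hne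
    refine Finset.sum_lt_sum (fun j _ => Finset.card_le_card (step_subset E R X j)) ⟨i, Finset.mem_univ i, ?_⟩
    exact Finset.card_lt_card (lt_of_le_of_ne (step_subset E R X i) hi)
  set X0 : I → Finset S := fun _ => Finset.univ with hX0
  have hinvall : ∀ m : ℕ, InvO E R (f^[m] X0) ∧ InvR E R (f^[m] X0) := by
    intro m
    induction m with
    | zero =>
        constructor
        · intro ν hν i s _; exact Finset.mem_univ s
        · intro i s hs; exact absurd (Finset.mem_univ s) hs
    | succ m ih =>
        rw [Function.iterate_succ_apply']
        exact ⟨invO_step ih.1, invR_step ih.2⟩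
  obtain ⟨n, hn⟩ := exists_fixed_iterate f (fun X => ∑ i, (X i).card) hmeas X0
  set Xf := f^[n] X0 with hXf
  obtain ⟨hO, hR⟩ := hinvall n
  set μ : Matching I S := fun i => best (R i) (Xf i) with hμ
  -- at the fixed point, no proposer is rejected
  have hnorej : ∀ s, ∀ j ∈ props R Xf s, j ∈ kept E s (props R Xf s) := by
    intro s j hj
    by_contra hc
    have hjX : s ∈ Xf j := mem_of_best_eq_some (mem_props.1 hj)
    have : s ∉ f Xf j := by
      intro hmem
      rcases mem_step.1 hmem with ⟨_, h1 | h1⟩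
      · exact hc h1
      · exact h1 hj
    rw [hn] at this
    exact this hjX
  have hassign : ∀ s, assigned μ s = props R Xf s := by
    intro s
    ext j
    simp only [assigned, props, Finset.mem_filter, Finset.mem_univ, true_and, hμ]
  have hfeas : Feasible E μ := by
    intro s
    rw [hassign s]
    have h1 : props R Xf s ⊆ kept E s (props R Xf s) := hnorej s
    have h2 := Finset.card_le_card h1
    have h3 := card_kept E s (props R Xf s)
    omega
  have hstable : Stable E R μ := by
    refine ⟨hfeas, fun i => best_le_none _ _, ?_⟩
    rintro i s ⟨hpref, hdisj⟩
    -- s must have rejected i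
    have hsX : s ∉ Xf i := by
      intro hsX
      exact absurd (best_le_some (p := R i) hsX) (not_le.2 hpref)
    obtain ⟨J, hJcard, hJ⟩ := hR i s hsX
    have hJsub : J ⊆ assigned μ s := by
      intro j hj
      rw [hassign s]
      exact mem_props.2 (hJ j hj).1
    have hJeq : J = assigned μ s :=
      Finset.eq_of_subset_of_card_le hJsub (by have := hfeas s; omega)
    rcases hdisj with h1 | ⟨j, hj, hij⟩
    · rw [← hJeq, hJcard] at h1; omega
    · have hjJ : j ∈ J := by
        rw [hJeq]
        exact Finset.mem_filter.2 ⟨Finset.mem_univ _, hj⟩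
      have := (hJ j hjJ).2
      exact absurd hij (by simp only [Prio.higher] at this ⊢; omega)
  refine ⟨μ, hstable, fun ν hν i => ?_⟩
  cases hνi : ν i with
  | none => exact best_le_none _ _
  | some s => exact best_le_some (hO ν hν i s hνi)

open Classical in
lemma DA_spec (E : Prio I S) (R : I → Pref S) : StudentOptimal E R (DA E R) := by
  have h : ∃ μ, StudentOptimal E R μ := exists_studentOptimal E R
  rw [DA, dif_pos h]
  exact h.choose_spec

end GaleShapley

/-! ### Auxiliary development: properties of the TDA rounds -/

section TDAProof

lemma trunc_rank_none (A : S → Prop) [DecidablePred A] (p : Pref S) :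
    (trunc A p).rank none = p.rank none := by
  simp [trunc, goodB]

lemma trunc_rank_pos {A : S → Prop} [DecidablePred A] {p : Pref S} {s : S} (h : A s) :
    (trunc A p).rank (some s) = p.rank (some s) := by
  simp [trunc, goodB, h]

lemma trunc_acc {A : S → Prop} [DecidablePred A] {p : Pref S} {s : S}
    (h : (trunc A p).rank (some s) ≤ (trunc A p).rank none) :
    A s ∧ p.rank (some s) < p.rank none := by
  by_cases hA : A s
  · refine ⟨hA, ?_⟩
    rw [trunc_rank_pos hA, trunc_rank_none] at h
    rcases lt_or_eq_of_le h with h1 | h1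
    · exact h1
    · exact absurd (p.inj h1) (by simp)
  · exfalso
    rw [trunc_rank_none] at h
    have h2 : (trunc A p).rank (some s) = bnd p + p.rank (some s) := by
      simp [trunc, goodB, hA]
    have h3 := rank_lt_bnd p none
    omega

/-- The preference profile used in round `k + 1` of TDA. -/
noncomputable def roundPref (E : Prio I S) (t : S → ℕ) (Q : I → Pref S) (k : ℕ) :
    I → Pref S :=
  fun j =>
    if TDAaux E t Q k j = none then trunc (fun s => t s = k + 1) (Q j)
    else trunc (fun _ => False) (Q j)

lemma TDAaux_succ (E : Prio I S) (t : S → ℕ) (Q : I → Pref S) (k : ℕ) (i : I) :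
    TDAaux E t Q (k + 1) i =
      match TDAaux E t Q k i with
      | some s => some s
      | none => DA E (roundPref E t Q k) i := rfl

lemma TDAaux_succ_of_some {E : Prio I S} {t : S → ℕ} {Q : I → Pref S} {k : ℕ} {i : I}
    {s : S} (h : TDAaux E t Q k i = some s) : TDAaux E t Q (k + 1) i = some s := by
  rw [TDAaux_succ, h]

lemma TDAaux_succ_of_none {E : Prio I S} {t : S → ℕ} {Q : I → Pref S} {k : ℕ} {i : I}
    (h : TDAaux E t Q k i = none) :
    TDAaux E t Q (k + 1) i = DA E (roundPref E t Q k) i := by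
  rw [TDAaux_succ, h]

lemma TDAaux_mono {E : Prio I S} {t : S → ℕ} {Q : I → Pref S} {k m : ℕ} (hkm : k ≤ m)
    {i : I} {s : S} (h : TDAaux E t Q k i = some s) : TDAaux E t Q m i = some s := by
  induction m with
  | zero =>
      have : k = 0 := by omega
      rwa [this] at h
  | succ m ih =>
      rcases Nat.lt_or_ge k (m + 1) with h1 | h1
      · exact TDAaux_succ_of_some (ih (by omega))
      · have : k = m + 1 := by omega
        rwa [this] at h

/-- A student already matched gets nothing from the round-`k + 1` DA. -/
lemma DA_round_none_of_matched {E : Prio I S} {t : S → ℕ} {Q : I → Pref S} {k : ℕ}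
    {j : I} {s' : S} (h : TDAaux E t Q k j = some s') :
    DA E (roundPref E t Q k) j = none := by
  cases hd : DA E (roundPref E t Q k) j with
  | none => rfl
  | some s'' =>
      exfalso
      have hIR := (DA_spec E (roundPref E t Q k)).1.2.1 j
      rw [hd] at hIR
      have hj : roundPref E t Q k j = trunc (fun _ => False) (Q j) := by
        simp [roundPref, h]
      rw [hj] at hIR
      exact (trunc_acc hIR).1

/-- Structure of a TDA assignment: it was received in the round of its tier, which is
a genuinely acceptable school. -/
lemma TDAaux_some_spec {E : Prio I S} {t : S → ℕ} {Q : I → Pref S} :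
    ∀ {m : ℕ} {i : I} {s : S}, TDAaux E t Q m i = some s →
      1 ≤ t s ∧ t s ≤ m ∧ TDAaux E t Q (t s - 1) i = none ∧
      DA E (roundPref E t Q (t s - 1)) i = some s ∧
      (Q i).rank (some s) < (Q i).rank none := by
  intro m
  induction m with
  | zero => intro i s h; simp [TDAaux] at h
  | succ m ih =>
      intro i s h
      cases hp : TDAaux E t Q m i with
      | some s' =>
          rw [TDAaux_succ_of_some hp] at h
          obtain rfl : s' = s := by injection h
          obtain ⟨h1, h2, h3, h4, h5⟩ := ih hp
          exact ⟨h1, by omega, h3, h4, h5⟩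
      | none =>
          rw [TDAaux_succ_of_none hp] at h
          have hIR := (DA_spec E (roundPref E t Q m)).1.2.1 i
          rw [h] at hIR
          have hi : roundPref E t Q m i = trunc (fun s => t s = m + 1) (Q i) := by
            simp [roundPref, hp]
          rw [hi] at hIR
          obtain ⟨hts, hacc⟩ := trunc_acc hIR
          have h1 : 1 ≤ t s := by omega
          have h2 : t s - 1 = m := by omega
          rw [h2]
          exact ⟨h1, by omega, hp, h, hacc⟩

/-- The students matched to `s` at any round `m ≥ t s` are exactly those matched to `s`
by the round-`t s` DA. -/
lemma TDAaux_matched_iff {E : Prio I S} {t : S → ℕ} {Q : I → Pref S} {s : S}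
    (hs : 1 ≤ t s) {m : ℕ} (hm : t s ≤ m) (j : I) :
    TDAaux E t Q m j = some s ↔ DA E (roundPref E t Q (t s - 1)) j = some s := by
  constructor
  · intro h
    exact (TDAaux_some_spec h).2.2.2.1
  · intro h
    have hnone : TDAaux E t Q (t s - 1) j = none := by
      cases hp : TDAaux E t Q (t s - 1) j with
      | none => rfl
      | some s' =>
          rw [DA_round_none_of_matched hp] at h
          exact absurd h (by simp)
    have hts : t s - 1 + 1 = t s := by omega
    have hstep : TDAaux E t Q (t s) j = some s := by
      rw [← hts, TDAaux_succ_of_none hnone]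
      exact h
    exact TDAaux_mono hm hstep

lemma assigned_TDAaux {E : Prio I S} {t : S → ℕ} {Q : I → Pref S} {s : S}
    (hs : 1 ≤ t s) {m : ℕ} (hm : t s ≤ m) :
    assigned (TDAaux E t Q m) s = assigned (DA E (roundPref E t Q (t s - 1))) s := by
  classical
  ext j
  simp only [assigned, Finset.mem_filter, Finset.mem_univ, true_and]
  exact TDAaux_matched_iff hs hm j

end TDAProof


/-- Under truthful reporting, the TDA outcome is stable with respect to
the tier structure: it is individually rational, and every blocking pair `(i, s)` has the
student matched to a school in a strictly earlier tier than `s`. -/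
theorem TDA_truthful_stable_wrt_tiers
    (E : Prio I S) (t : S → ℕ) (T : ℕ) (ht : IsTierStructure t T)
    (R : I → Pref S) :
    IndivRat R (TDA E t R) ∧
    ∀ (i : I) (s : S), Blocks E R (TDA E t R) i s →
      ∃ s0 : S, TDA E t R i = some s0 ∧ t s0 < t s := by
  have hIR : IndivRat R (TDA E t R) := by
    intro i
    cases h : TDA E t R i with
    | none => exact le_refl _
    | some s =>
        rw [TDA] at h
        exact le_of_lt (TDAaux_some_spec h).2.2.2.2
  refine ⟨hIR, ?_⟩
  intro i s hblock
  have hk1 : 1 ≤ t s := (ht.1 s).1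
  have hksup : t s ≤ Finset.univ.sup t := Finset.le_sup (Finset.mem_univ s)
  cases hc : TDAaux E t R (t s - 1) i with
  | some s0 =>
      have hμ : TDA E t R i = some s0 := TDAaux_mono (by omega) hc
      have h0 : t s0 ≤ t s - 1 := (TDAaux_some_spec hc).2.1
      exact ⟨s0, hμ, by omega⟩
  | none =>
      exfalso
      set R' := roundPref E t R (t s - 1) with hR'
      set ν := DA E R' with hν
      have hst : Stable E R' ν := (DA_spec E R').1
      obtain ⟨hpref, hdisj⟩ := hblock
      have hR'i : R' i = trunc (fun s' => t s' = (t s - 1) + 1) (R i) := by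
        simp [hR', roundPref, hc]
      have hts : t s - 1 + 1 = t s := by omega
      have hranks : (R' i).rank (some s) = (R i).rank (some s) := by
        rw [hR'i]
        exact trunc_rank_pos (by omega)
      have hassigned : assigned (TDA E t R) s = assigned ν s := by
        rw [TDA, hν, hR']
        exact assigned_TDAaux hk1 hksup
      have hblock' : Blocks E R' ν i s := by
        refine ⟨?_, ?_⟩
        · -- i strictly prefers s to ν i under R'
          cases hνi : ν i with
          | none =>
              have h1 : (R i).rank (some s) < (R i).rank none :=
                lt_of_lt_of_le hpref (hIR i)
              rw [hranks, hR'i, trunc_rank_none]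
              exact h1
          | some s1 =>
              have hnext : TDAaux E t R (t s) i = some s1 := by
                rw [← hts, TDAaux_succ_of_none hc, ← hR', ← hν]
                exact hνi
              have hμi : TDA E t R i = some s1 := by
                rw [TDA]
                exact TDAaux_mono hksup hnext
              have hIRν := hst.2.1 i
              rw [hνi, hR'i] at hIRν
              obtain ⟨hts1, _⟩ := trunc_acc hIRν
              have hrank1 : (R' i).rank (some s1) = (R i).rank (some s1) := by
                rw [hR'i]
                exact trunc_rank_pos hts1
              rw [hranks, hrank1]
              rw [hμi] at hpref
              exact hpref
        · rw [← hassigned]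
          rcases hdisj with h1 | ⟨j, hj, hij⟩
          · exact Or.inl h1
          · refine Or.inr ⟨j, ?_, hij⟩
            rw [TDA] at hj
            rw [hν, hR']
            exact (TDAaux_matched_iff hk1 hksup j).1 hj
      exact hst.2.2 i s hblock'


end SchoolChoice
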